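/- Let d be an odd prime, q = exp(2πi/d), P₀ the DFT matrix with entries d^{-1/2} q^{jk}, D = diag(q^{j(j+1)/2}), and P_k := D^{-k} P₀ for k = 0,...,d-1. Then the d+1 orthonormal bases of C^d given by the standard basis together with the columns of P₀, P₁, ..., P_{d-1} are pairwise mutually unbiased: for any two distinct bases B, B' in this family and any b ∈ B, b' ∈ B', |⟨b, b'⟩| = d^{-1/2}. -/

import Mathlib

/-!
Write `q ^ n = ψ n` for the standard additive character `ψ` of `ZMod d`, so that
`D = diag (ψ (chirp j))` with `chirp j = j (j + 1) / 2`. For the bases `D ^ (-m) P₀` and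
`D ^ (-n) P₀` the Gram matrix has entries `d⁻¹ ∑ₖ ψ ((m - n) chirp k + k (j - i))`.
For `m = n` this is orthogonality of characters, so every `D ^ (-m) P₀` is unitary.
For `m ≢ n` it is a quadratic Gauss sum (`2` is invertible since `d` is odd), of absolute
value `√d` by squaring: for `f x = a x² + b x`, `|∑ₓ ψ (f x)|² = ∑ₘ ψ (f m) ∑ᵧ ψ (2 a m y)`,
and the inner sum vanishes unless `m = 0`.
-/

open Matrix ComplexConjugate ZMod

theorem AddChar.norm_sum_quadratic {F : Type*} [Field F] [Fintype F] {ψ : AddChar F ℂ}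
    (hψ : ψ.IsPrimitive) (h2 : (2 : F) ≠ 0) {a : F} (ha : a ≠ 0) (b : F) :
    ‖∑ x, ψ (a * x ^ 2 + b * x)‖ = √(Fintype.card F) := by
  classical
  set f : F → F := fun x => a * x ^ 2 + b * x
  have hsq : ((‖∑ x, ψ (f x)‖ ^ 2 : ℝ) : ℂ) = Fintype.card F :=
    calc ((‖∑ x, ψ (f x)‖ ^ 2 : ℝ) : ℂ)
        = ∑ y, ∑ x, ψ (f x) * conj (ψ (f y)) := by
          push_cast
          rw [← Complex.mul_conj', map_sum, Finset.sum_mul_sum, Finset.sum_comm]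
      _ = ∑ y, ∑ m, ψ (f m) * ψ (y * (2 * a * m)) := by
          refine Finset.sum_congr rfl fun y _ => ?_
          rw [← Equiv.sum_comp (Equiv.addLeft y)]
          refine Finset.sum_congr rfl fun m _ => ?_
          rw [← AddChar.map_neg_eq_conj, ← AddChar.map_add_eq_mul, ← AddChar.map_add_eq_mul]
          congr 1
          simp only [Equiv.coe_addLeft, f]
          ring
      _ = ∑ m, ψ (f m) * if 2 * a * m = 0 then (Fintype.card F : ℂ) else 0 := by
          rw [Finset.sum_comm]
          simp_rw [← Finset.mul_sum, AddChar.sum_mulShift _ hψ, apply_ite Nat.cast,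
            Nat.cast_zero]
      _ = Fintype.card F := by simp [h2, ha, f]
  rw [← Real.sqrt_sq (norm_nonneg _)]
  exact congrArg Real.sqrt (mod_cast hsq)

theorem Matrix.diagonal_addChar_zpow {n A R : Type*} [Fintype n] [DecidableEq n]
    [AddCommGroup A] [CommRing R] (ψ : AddChar A R) (w : n → A) (m : ℤ) :
    (diagonal fun j => ψ (w j)) ^ m = diagonal fun j => ψ (m • w j) := by
  obtain ⟨k, rfl | rfl⟩ := Int.eq_nat_or_neg m
  · simp [diagonal_pow, AddChar.map_nsmul_eq_pow]
  · rw [zpow_neg_natCast, diagonal_pow]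
    refine inv_eq_left_inv ?_
    rw [diagonal_mul_diagonal, ← diagonal_one]
    congr 1
    ext j
    rw [Pi.pow_apply, ← AddChar.map_nsmul_eq_pow, ← AddChar.map_add_eq_mul, neg_smul,
      natCast_zsmul, neg_add_cancel, AddChar.map_zero_eq_one]

lemma ZMod.exp_pow_eq_stdAddChar (d : ℕ) [NeZero d] (n : ℕ) :
    Complex.exp (2 * Real.pi * Complex.I / d) ^ n = stdAddChar (n : ZMod d) := by
  rw [← Complex.exp_nat_mul, ← Int.cast_natCast (R := ZMod d), stdAddChar_coe]
  push_cast
  ring_nf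

lemma ZMod.intCast_ne_intCast_of_abs_sub_lt {d : ℕ} {m n : ℤ} (hmn : m ≠ n)
    (h : |m - n| < d) : (m : ZMod d) ≠ n := by
  rw [Ne, intCast_eq_intCast_iff_dvd_sub]
  intro hdvd
  have := Int.eq_zero_of_abs_lt_dvd hdvd (by rwa [abs_sub_comm])
  omega

lemma Fin.natCast_zmod_injective {d : ℕ} : Function.Injective fun k : Fin d => (k : ZMod d) := by
  intro k l h
  have := congrArg ZMod.val h
  simp only [val_natCast_of_lt k.isLt, val_natCast_of_lt l.isLt] at this
  exact Fin.ext this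

lemma Fin.sum_natCast_zmod {d : ℕ} [NeZero d] {M : Type*} [AddCommMonoid M] (f : ZMod d → M) :
    ∑ k : Fin d, f k = ∑ x, f x :=
  Fintype.sum_bijective _ ((Fintype.bijective_iff_injective_and_card _).2
    ⟨Fin.natCast_zmod_injective, by simp⟩) _ _ fun _ => rfl

namespace MUB

variable {d : ℕ}

def chirp (d : ℕ) (j : Fin d) : ZMod d := ((j * (j + 1) / 2 : ℕ) : ZMod d)

lemma chirp_eq [Fact d.Prime] (h2 : (2 : ZMod d) ≠ 0) (j : Fin d) :
    chirp d j = (j : ZMod d) * ((j : ZMod d) + 1) / 2 := by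
  rw [chirp, Nat.cast_div (Nat.even_mul_succ_self j).two_dvd (by exact_mod_cast h2)]
  push_cast
  ring

variable [NeZero d]

noncomputable def dftMatrix (d : ℕ) [NeZero d] : Matrix (Fin d) (Fin d) ℂ :=
  of fun j k => ((1 / √d : ℝ) : ℂ) * stdAddChar ((j : ZMod d) * (k : ZMod d))

/-- The paper's `P_m = D ^ (-m) P₀` is `twistedDFT fun k => -m * chirp d k`. -/
noncomputable def twistedDFT (u : Fin d → ZMod d) : Matrix (Fin d) (Fin d) ℂ :=
  diagonal (fun k => stdAddChar (u k)) * dftMatrix d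

lemma twistedDFT_apply (u : Fin d → ZMod d) (j k : Fin d) :
    twistedDFT u j k =
      ((1 / √d : ℝ) : ℂ) * stdAddChar (u j + (j : ZMod d) * (k : ZMod d)) := by
  rw [twistedDFT, diagonal_mul, dftMatrix, of_apply, AddChar.map_add_eq_mul]
  ring

lemma norm_twistedDFT_apply (u : Fin d → ZMod d) (j k : Fin d) :
    ‖twistedDFT u j k‖ = 1 / √d := by
  rw [twistedDFT_apply, norm_mul, AddChar.norm_apply, mul_one, Complex.norm_real,
    Real.norm_of_nonneg (by positivity)]

lemma conjTranspose_twistedDFT_mul_apply (u v : Fin d → ZMod d) (i j : Fin d) :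
    ((twistedDFT u)ᴴ * twistedDFT v) i j =
      (d : ℂ)⁻¹ * ∑ k : Fin d,
        stdAddChar (v k - u k + (k : ZMod d) * ((j : ZMod d) - (i : ZMod d))) := by
  have hc : star ((1 / √d : ℝ) : ℂ) * ((1 / √d : ℝ) : ℂ) = (d : ℂ)⁻¹ := by
    rw [Complex.star_def, Complex.conj_ofReal, ← Complex.ofReal_mul, div_mul_div_comm, one_mul,
      Real.mul_self_sqrt d.cast_nonneg]
    push_cast
    exact one_div _
  simp only [mul_apply, conjTranspose_apply, twistedDFT_apply, Finset.mul_sum, star_mul', ← hc]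
  refine Finset.sum_congr rfl fun k _ => ?_
  rw [Complex.star_def, ← AddChar.map_neg_eq_conj, mul_mul_mul_comm, ← AddChar.map_add_eq_mul]
  congr 2
  ring

lemma twistedDFT_mem_unitaryGroup (u : Fin d → ZMod d) :
    twistedDFT u ∈ unitaryGroup (Fin d) ℂ := by
  rw [mem_unitaryGroup_iff']
  ext i j
  rw [star_eq_conjTranspose, conjTranspose_twistedDFT_mul_apply]
  simp only [sub_self, zero_add]
  rw [Fin.sum_natCast_zmod (fun x => stdAddChar (x * ((j : ZMod d) - (i : ZMod d)))),
    AddChar.sum_mulShift _ (isPrimitive_stdAddChar d), ZMod.card, one_apply]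
  by_cases hij : i = j
  · simp [hij, NeZero.ne]
  · have : (j : ZMod d) - (i : ZMod d) ≠ 0 :=
      sub_ne_zero.2 fun h => hij (Fin.natCast_zmod_injective h).symm
    simp [hij, this]

lemma norm_conjTranspose_twistedDFT_mul_apply [Fact d.Prime] (h2 : (2 : ZMod d) ≠ 0)
    {s t : ZMod d} (hst : s ≠ t) (i j : Fin d) :
    ‖((twistedDFT fun k => s * chirp d k)ᴴ * twistedDFT fun k => t * chirp d k) i j‖ =
      1 / √d := by
  set c : ZMod d := (j : ZMod d) - (i : ZMod d)
  have hquad (k : Fin d) : t * chirp d k - s * chirp d k + (k : ZMod d) * c =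
      (t - s) / 2 * (k : ZMod d) ^ 2 + ((t - s) / 2 + c) * (k : ZMod d) := by
    rw [chirp_eq h2]
    ring
  have hd : (0 : ℝ) < d := Nat.cast_pos.2 (NeZero.pos d)
  rw [conjTranspose_twistedDFT_mul_apply, Finset.sum_congr rfl fun k _ => congrArg _ (hquad k),
    Fin.sum_natCast_zmod (fun x => stdAddChar ((t - s) / 2 * x ^ 2 + ((t - s) / 2 + c) * x)),
    norm_mul, AddChar.norm_sum_quadratic (isPrimitive_stdAddChar d) h2
      (div_ne_zero (sub_ne_zero.2 hst.symm) h2), ZMod.card, norm_inv, Complex.norm_natCast,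
    inv_mul_eq_div, div_eq_div_iff hd.ne' (Real.sqrt_pos.2 hd).ne', one_mul,
    Real.mul_self_sqrt hd.le]

end MUB

open MUB in
theorem stmt_15 (d : ℕ) (hd : d.Prime) (hodd : Odd d) (q : ℂ)
    (hq : q = Complex.exp (2 * Real.pi * Complex.I / d))
    (D P₀ : Matrix (Fin d) (Fin d) ℂ)
    (hD : D = Matrix.diagonal fun j : Fin d => q ^ ((j : ℕ) * ((j : ℕ) + 1) / 2))
    (hP₀ : P₀ = Matrix.of fun j k : Fin d => ((1 / Real.sqrt d : ℝ) : ℂ) * q ^ ((j : ℕ) * (k : ℕ)))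
    (Q : Fin (d + 1) → Matrix (Fin d) (Fin d) ℂ)
    (hQ : Q = fun a : Fin (d + 1) => if (a : ℕ) = 0 then (1 : Matrix (Fin d) (Fin d) ℂ)
      else D ^ (-(((a : ℕ) : ℤ) - 1)) * P₀) :
    (∀ a, Q a ∈ Matrix.unitaryGroup (Fin d) ℂ) ∧
      ∀ a b : Fin (d + 1), a ≠ b →
        ∀ i j, ‖((Q a)ᴴ * Q b) i j‖ = 1 / Real.sqrt d := by
  have : Fact d.Prime := ⟨hd⟩
  have hpow (n : ℕ) : q ^ n = stdAddChar (n : ZMod d) := hq ▸ exp_pow_eq_stdAddChar d n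
  have hQ₀ (a : Fin (d + 1)) (ha : (a : ℕ) = 0) : Q a = 1 := by rw [hQ]; exact if_pos ha
  have hQ₁ (a : Fin (d + 1)) (ha : (a : ℕ) ≠ 0) :
      Q a = twistedDFT fun k => ((-(((a : ℕ) : ℤ) - 1) : ℤ) : ZMod d) * chirp d k := by
    have hD' : D = diagonal fun j => stdAddChar (chirp d j) := by simp [hD, hpow, chirp]
    have hP : P₀ = dftMatrix d := by
      ext j k
      simp only [hP₀, dftMatrix, of_apply, hpow, Nat.cast_mul]
    simp only [hQ, if_neg ha, hD', hP, diagonal_addChar_zpow, twistedDFT, zsmul_eq_mul]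
  refine ⟨fun a => ?_, fun a b hab i j => ?_⟩
  · by_cases ha : (a : ℕ) = 0
    · exact hQ₀ a ha ▸ one_mem _
    · exact hQ₁ a ha ▸ twistedDFT_mem_unitaryGroup _
  by_cases ha : (a : ℕ) = 0 <;> by_cases hb : (b : ℕ) = 0
  · exact absurd (Fin.ext (ha.trans hb.symm)) hab
  · rw [hQ₀ a ha, conjTranspose_one, one_mul, hQ₁ b hb, norm_twistedDFT_apply]
  · rw [hQ₀ b hb, mul_one, conjTranspose_apply, norm_star, hQ₁ a ha, norm_twistedDFT_apply]
  · have h2 : (2 : ZMod d) ≠ 0 := Ring.two_ne_zero <| by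
      rw [ZMod.ringChar_zmod_n]; rintro rfl; exact absurd hodd (by decide)
    have hab' : (a : ℕ) ≠ b := Fin.val_ne_iff.2 hab
    rw [hQ₁ a ha, hQ₁ b hb]
    refine norm_conjTranspose_twistedDFT_mul_apply h2
      (intCast_ne_intCast_of_abs_sub_lt (by omega) (abs_lt.2 ⟨?_, ?_⟩)) i j <;> omega
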